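/- Let r₁ = 1/2 and r_k = 1/(k (log₂ k)^{1+u}) for k ≥ 2, where 0 < u ≤ 1. Then ∑_{k=1}^∞ r_k < ∞ but ∑_{k=2}^∞ (- r_k log₂ r_k) = ∞. -/

import Mathlib

/-!
Both series are compared with the Bertrand series `b_p(k) = 1 / (k (log₂ k)^p)`. Cauchy
condensation turns `b_p` into `1 / k^p`, because `log₂ 2^k = k`, so `∑ b_p` converges iff `p > 1`.
For `k ≥ 2` we have `r_k = b_{1+u}(k)` and
`-r_k log₂ r_k = r_k (log₂ k + (1+u) log₂ log₂ k) ≥ b_u(k) ≥ b_1(k)` since `u ≤ 1`.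
-/

open Real Filter

noncomputable def bertrand (p : ℝ) (k : ℕ) : ℝ := 1 / (k * logb 2 k ^ p)

lemma one_le_logb_two_natCast {k : ℕ} (hk : 2 ≤ k) : 1 ≤ logb 2 k := by
  rw [le_logb_iff_rpow_le one_lt_two (by positivity), rpow_one]
  exact_mod_cast hk

lemma logb_two_natCast_nonneg (k : ℕ) : 0 ≤ logb 2 k :=
  div_nonneg (log_natCast_nonneg k) (log_nonneg one_le_two)

lemma bertrand_nonneg (p : ℝ) (k : ℕ) : 0 ≤ bertrand p k :=
  one_div_nonneg.2 (mul_nonneg k.cast_nonneg (rpow_nonneg (logb_two_natCast_nonneg k) p))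

lemma bertrand_succ_le {p : ℝ} (hp : 0 ≤ p) {k : ℕ} (hk : 2 ≤ k) :
    bertrand p (k + 1) ≤ bertrand p k := by
  have hL := one_le_logb_two_natCast hk
  refine one_div_le_one_div_of_le (mul_pos (by positivity) (rpow_pos_of_pos (by linarith) p)) ?_
  gcongr <;> norm_num

lemma two_pow_mul_bertrand_two_pow (p : ℝ) (k : ℕ) :
    2 ^ k * bertrand p (2 ^ k) = 1 / (k : ℝ) ^ p := by
  rw [bertrand, Nat.cast_pow, Nat.cast_ofNat, logb_pow, logb_self_eq_one one_lt_two, mul_one,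
    mul_one_div, div_mul_cancel_left₀ (by positivity), one_div]

theorem summable_bertrand_iff {p : ℝ} (hp : 0 ≤ p) : Summable (bertrand p) ↔ 1 < p := by
  rw [← summable_condensed_iff_of_eventually_nonneg (.of_forall (bertrand_nonneg p))
    (eventually_atTop.2 ⟨2, fun k hk => bertrand_succ_le hp hk⟩)]
  simp_rw [two_pow_mul_bertrand_two_pow]
  exact summable_one_div_nat_rpow

lemma bertrand_one_le_neg_mul_logb_bertrand {p : ℝ} (hp0 : 0 ≤ p) (hp2 : p ≤ 2) {k : ℕ}
    (hk : 2 ≤ k) : bertrand 1 k ≤ -bertrand p k * logb 2 (bertrand p k) := by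
  set L := logb 2 k with hL_def
  have hL : 1 ≤ L := one_le_logb_two_natCast hk
  have hk0 : (0 : ℝ) < k := by positivity
  have hL0 : 0 < L := by linarith
  have hlogb : logb 2 (bertrand p k) = -(L + p * logb 2 L) := by
    rw [bertrand, one_div, logb_inv, logb_mul hk0.ne' (rpow_pos_of_pos hL0 p).ne',
      logb_rpow_eq_mul_logb_of_pos hL0]
  calc bertrand 1 k = 1 / (k * L) := by rw [bertrand, rpow_one]
    _ ≤ 1 / (k * L ^ (p - 1)) := by
      gcongr
      calc L ^ (p - 1) ≤ L ^ (1 : ℝ) := rpow_le_rpow_of_exponent_le hL (by linarith)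
        _ = L := rpow_one L
    _ = bertrand p k * L := by
      rw [bertrand, ← hL_def, rpow_sub_one hL0.ne']
      field_simp
    _ ≤ bertrand p k * (L + p * logb 2 L) := by
      gcongr
      · exact bertrand_nonneg p k
      · exact le_add_of_nonneg_right (mul_nonneg hp0 (logb_nonneg one_lt_two hL))
    _ = -bertrand p k * logb 2 (bertrand p k) := by rw [hlogb]; ring

theorem summable_r_not_summable_entropy (u : ℝ) (hu0 : 0 < u) (hu1 : u ≤ 1)
    (r : ℕ → ℝ)
    (hr : ∀ k, 2 ≤ k → r k = 1 / ((k : ℝ) * (Real.logb 2 k) ^ (1 + u))) :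
    (Summable r) ∧ ¬ Summable (fun k => - r k * Real.logb 2 (r k)) := by
  have hr_eq : r =ᶠ[atTop] bertrand (1 + u) := eventually_atTop.2 ⟨2, hr⟩
  refine ⟨(summable_congr_atTop hr_eq).2 ((summable_bertrand_iff (by linarith)).2 (by linarith)),
    fun hS => ?_⟩
  have h_one : ¬ Summable (bertrand 1) := by simp [summable_bertrand_iff zero_le_one]
  refine h_one (hS.of_norm_bounded_eventually_nat ?_)
  filter_upwards [hr_eq, eventually_ge_atTop 2] with k hrk hk
  rw [norm_of_nonneg (bertrand_nonneg 1 k), hrk]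
  exact bertrand_one_le_neg_mul_logb_bertrand (by linarith) (by linarith) hk
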